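/- Let G be a {C₃, C₄}-free graph of maximum degree at most d (d ≥ 3), and let M be an induced matching of G that is maximal and stable under the local-search exchange operation. Then |M| ≥ m(G)/d². -/

import Mathlib

open Classical

variable {V : Type*}

/-- Two edges (as `Sym2 V`) are in conflict: they are at distance at most 2
in the line graph, i.e. they share a vertex or some edge of `G` joins them. -/
def Conflict (G : SimpleGraph V) (e f : Sym2 V) : Prop :=
  ∃ a ∈ e, ∃ b ∈ f, a = b ∨ G.Adj a b

/-- `C_G(e)`: the set of edges of `G` in conflict with `e` (including `e`). -/
def CSet (G : SimpleGraph V) (e : Sym2 V) : Set (Sym2 V) :=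
  {f | f ∈ G.edgeSet ∧ Conflict G e f}

/-- `PC_G(M, e)`: the private conflict edges of `e` with respect to `M`. -/
def PCSet (G : SimpleGraph V) (M : Set (Sym2 V)) (e : Sym2 V) : Set (Sym2 V) :=
  CSet G e \ ⋃ f ∈ M \ {e}, CSet G f

/-- `M` is an induced matching of `G`. -/
def IsInducedMatching (G : SimpleGraph V) (M : Set (Sym2 V)) : Prop :=
  M ⊆ G.edgeSet ∧ ∀ e ∈ M, ∀ f ∈ M, e ≠ f → ¬ Conflict G e f

/-- `M` is a maximal induced matching of `G`. -/
def IsMaximalInducedMatching (G : SimpleGraph V) (M : Set (Sym2 V)) : Prop :=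
  IsInducedMatching G M ∧ ∀ M', IsInducedMatching G M' → M ⊆ M' → M' = M

/-- `M` is stable under the local-search exchange operation: any two distinct
private conflict edges of an edge of `M` conflict with each other. -/
def LSStable (G : SimpleGraph V) (M : Set (Sym2 V)) : Prop :=
  ∀ e ∈ M, ∀ e' ∈ PCSet G M e, ∀ e'' ∈ PCSet G M e, e' ≠ e'' → e'' ∈ CSet G e'

/-- The edges of `G` with both endpoints in `S`. -/
def edgesWithin (G : SimpleGraph V) (S : Set V) : Set (Sym2 V) :=
  {e | e ∈ G.edgeSet ∧ ∀ a ∈ e, a ∈ S}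

/-- The edges of `G` with one endpoint in `S` and the other in `T`. -/
def edgesBetween (G : SimpleGraph V) (S T : Set V) : Set (Sym2 V) :=
  {e | e ∈ G.edgeSet ∧ ∃ a b : V, e = s(a, b) ∧ a ∈ S ∧ b ∈ T}

/-- `G` has no induced cycle of length 4. -/
def C4Free (G : SimpleGraph V) : Prop :=
  ¬ ∃ a b c d : V, G.Adj a b ∧ G.Adj b c ∧ G.Adj c d ∧ G.Adj d a ∧
      ¬ G.Adj a c ∧ ¬ G.Adj b d ∧ a ≠ c ∧ b ≠ d

/-- `G` has no induced cycle of length 5. -/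
def C5Free (G : SimpleGraph V) : Prop :=
  ¬ ∃ a b c d e : V, G.Adj a b ∧ G.Adj b c ∧ G.Adj c d ∧ G.Adj d e ∧ G.Adj e a ∧
      ¬ G.Adj a c ∧ ¬ G.Adj a d ∧ ¬ G.Adj b d ∧ ¬ G.Adj b e ∧ ¬ G.Adj c e ∧
      a ≠ c ∧ a ≠ d ∧ b ≠ d ∧ b ≠ e ∧ c ≠ e

/-- `G` has no induced `K_{1,3}` (claw). -/
def ClawFree (G : SimpleGraph V) : Prop :=
  ¬ ∃ v a b c : V, G.Adj v a ∧ G.Adj v b ∧ G.Adj v c ∧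
      ¬ G.Adj a b ∧ ¬ G.Adj a c ∧ ¬ G.Adj b c ∧ a ≠ b ∧ a ≠ c ∧ b ≠ c


/-!
Double counting. By maximality every edge `f` conflicts with some `e ∈ M`; let `f` give one unit
to each such `e`, and one more unit if `e` is the only one, i.e. if `f ∈ PC(M, e)`. Every edge
gives at least two units and `e` receives `|C(e)| + |PC(M, e)|`, so it suffices to show
`|C(e)| + |PC(M, e)| ≤ 2 d²` for `e = uv ∈ M`.

The edges in conflict with `uv` are `uv`, the other edges at `u` or at `v`, and the edges of the
two wings: those avoiding `u` and `v` and meeting `N(u)`, resp. `N(v)`. Hence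
`|C(e)| ≤ 1 + 2(d-1) + 2(d-1)²`. By stability the private edges pairwise conflict. Without
triangles and 4-cycles, an edge `ux` conflicts with an edge `yz` of the wing of `v` (`y ∈ N(v)`)
only if `x ~ z`. So two private edges at `u` leave no private edge in the wing of `v`, one leaves
at most one, and if there is none, the private wing edges either share their endpoint in `N(v)`
or number at most `2 < d`. Thus fewer than `d` private edges lie at `u` or in the wing of `v`,
and symmetrically, so `|PC(M, e)| ≤ 1 + 2(d-1)`.
-/

namespace SimpleGraph
variable {G : SimpleGraph V} {a b c d : V}

theorem CliqueFree.not_adj_of_adj_of_adj (h3 : G.CliqueFree 3) (hab : G.Adj a b)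
    (hbc : G.Adj b c) : ¬ G.Adj a c :=
  fun hac => h3 {a, b, c} (is3Clique_triple_iff.mpr ⟨hab, hac, hbc⟩)

end SimpleGraph

open SimpleGraph

section Girth
variable {G : SimpleGraph V} {a b c d p q w x y z y' z' : V}

theorem C4Free.false_of_cycle (h4 : C4Free G) (h3 : G.CliqueFree 3) (hab : G.Adj a b)
    (hbc : G.Adj b c) (hcd : G.Adj c d) (hda : G.Adj d a) (hac : a ≠ c) (hbd : b ≠ d) : False :=
  h4 ⟨a, b, c, d, hab, hbc, hcd, hda, h3.not_adj_of_adj_of_adj hab hbc,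
    h3.not_adj_of_adj_of_adj hbc hcd, hac, hbd⟩

theorem conflict_mk_iff : Conflict G s(a, b) s(c, d) ↔
    (a = c ∨ G.Adj a c) ∨ (a = d ∨ G.Adj a d) ∨ (b = c ∨ G.Adj b c) ∨ (b = d ∨ G.Adj b d) := by
  simp only [Conflict, Sym2.mem_iff, exists_eq_or_imp, exists_eq_left, or_assoc]

theorem adj_of_conflict_star_wing (h3 : G.CliqueFree 3) (h4 : C4Free G) (hpq : G.Adj p q)
    (hpx : G.Adj p x) (hxq : x ≠ q) (hqy : G.Adj q y) (hyz : G.Adj y z) (hyp : y ≠ p)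
    (hzp : z ≠ p) (hzq : z ≠ q) (hc : Conflict G s(p, x) s(y, z)) : G.Adj x z := by
  have hpy : ¬ G.Adj p y := h3.not_adj_of_adj_of_adj hpq hqy
  have hpz : ¬ G.Adj p z := fun hpz =>
    h4.false_of_cycle h3 hpq hqy hyz hpz.symm hyp.symm hzq.symm
  rw [conflict_mk_iff] at hc
  rcases hc with (h | h) | (h | h) | (h | h) | (h | h)
  · exact absurd h.symm hyp
  · exact absurd h hpy
  · exact absurd h.symm hzp
  · exact absurd h hpz
  · exact absurd (h ▸ hpx) hpy
  · exact (h4.false_of_cycle h3 hpx h hqy.symm hpq.symm hyp.symm hxq).elim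
  · exact absurd (h ▸ hpx) hpz
  · exact h

theorem adj_of_conflict_wing_wing (h3 : G.CliqueFree 3) (h4 : C4Free G)
    (hqy : G.Adj q y) (hyz : G.Adj y z) (hqy' : G.Adj q y') (hyz' : G.Adj y' z') (hzq : z ≠ q)
    (hzq' : z' ≠ q) (hyy' : y ≠ y') (hc : Conflict G s(y, z) s(y', z')) : G.Adj z z' := by
  have hqz : ¬ G.Adj q z := h3.not_adj_of_adj_of_adj hqy hyz
  have hqz' : ¬ G.Adj q z' := h3.not_adj_of_adj_of_adj hqy' hyz'
  rw [conflict_mk_iff] at hc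
  rcases hc with (h | h) | (h | h) | (h | h) | (h | h)
  · exact absurd h hyy'
  · exact absurd h (h3.not_adj_of_adj_of_adj hqy.symm hqy')
  · exact absurd (h ▸ hqy) hqz'
  · exact (h4.false_of_cycle h3 hqy h hyz'.symm hqy'.symm hzq'.symm hyy').elim
  · exact absurd (h ▸ hqy') hqz
  · exact (h4.false_of_cycle h3 hqy' h.symm hyz.symm hqy.symm hzq.symm hyy'.symm).elim
  · exact (h4.false_of_cycle h3 hqy hyz (h ▸ hyz'.symm) hqy'.symm hzq.symm hyy').elim
  · exact h

theorem false_of_conflict_two_wing_edges_sharing_vertex (h3 : G.CliqueFree 3) (h4 : C4Free G)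
    (hqy : G.Adj q y) (hyz : G.Adj y z) (hyw : G.Adj y w) (hqy' : G.Adj q y')
    (hyz' : G.Adj y' z') (hzq : z ≠ q) (hwq : w ≠ q) (hzq' : z' ≠ q) (hzw : z ≠ w)
    (hyy' : y ≠ y') (hz : Conflict G s(y, z) s(y', z')) (hw : Conflict G s(y, w) s(y', z')) :
    False := by
  have hzz' := adj_of_conflict_wing_wing h3 h4 hqy hyz hqy' hyz' hzq hzq' hyy' hz
  have hwz' := adj_of_conflict_wing_wing h3 h4 hqy hyw hqy' hyz' hwq hzq' hyy' hw
  have hyz'ne : y ≠ z' := fun h => h3.not_adj_of_adj_of_adj hqy' hyz' (h ▸ hqy)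
  exact h4.false_of_cycle h3 hyz hzz' hwz'.symm hyw.symm hyz'ne hzw

end Girth

section Matching
variable {G : SimpleGraph V} {M : Set (Sym2 V)} {e f : Sym2 V}

theorem Conflict.symm (h : Conflict G e f) : Conflict G f e := by
  obtain ⟨a, ha, b, hb, hab⟩ := h
  exact ⟨b, hb, a, ha, hab.imp Eq.symm G.adj_symm⟩

theorem conflict_refl (e : Sym2 V) : Conflict G e e := by
  induction e using Sym2.ind with
  | _ a b => exact ⟨a, Sym2.mem_mk_left a b, a, Sym2.mem_mk_left a b, Or.inl rfl⟩

theorem IsMaximalInducedMatching.exists_conflict (hM : IsMaximalInducedMatching G M)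
    (hf : f ∈ G.edgeSet) : ∃ e ∈ M, Conflict G e f := by
  by_contra! hfree
  have hinsert : IsInducedMatching G (insert f M) := by
    refine ⟨Set.insert_subset hf hM.1.1, ?_⟩
    rintro e₁ (rfl | he₁) e₂ (rfl | he₂) hne
    · exact absurd rfl hne
    · exact fun hc => hfree e₂ he₂ hc.symm
    · exact hfree e₁ he₁
    · exact hM.1.2 e₁ he₁ e₂ he₂ hne
  have hfM : f ∈ M := hM.2 _ hinsert (Set.subset_insert f M) ▸ Set.mem_insert f M
  exact hfree f hfM (conflict_refl f)

theorem mem_pcSet_of_forall_conflict_eq (hf : f ∈ G.edgeSet) (hef : Conflict G e f)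
    (hpriv : ∀ e' ∈ M, Conflict G e' f → e' = e) : f ∈ PCSet G M e := by
  refine ⟨⟨hf, hef⟩, ?_⟩
  simp only [Set.mem_iUnion, Set.mem_sdiff, Set.mem_singleton_iff, not_exists]
  exact fun e' ⟨he', hne⟩ hfe' => hne (hpriv e' he' hfe'.2)

theorem LSStable.pairwise_conflict (hstab : LSStable G M) (he : e ∈ M) :
    (PCSet G M e).Pairwise (Conflict G) :=
  fun _ h' _ h'' hne => (hstab e he _ h' _ h'' hne).2

end Matching

open Finset in
theorem two_mul_card_le_sum_card_add_card {α β : Type*} (A : Finset α) (B : Finset β)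
    (r : α → β → Prop) (C P : α → Finset β) (hcover : ∀ b ∈ B, ∃ a ∈ A, r a b)
    (hC : ∀ a ∈ A, ∀ b ∈ B, r a b → b ∈ C a)
    (hP : ∀ a ∈ A, ∀ b ∈ B, r a b → (∀ a' ∈ A, r a' b → a' = a) → b ∈ P a) :
    2 * #B ≤ ∑ a ∈ A, (#(C a) + #(P a)) := by
  classical
  have hweight : ∀ b ∈ B, 2 ≤ #{a ∈ A | b ∈ C a} + #{a ∈ A | b ∈ P a} := by
    intro b hb
    obtain ⟨a, ha, hab⟩ := hcover b hb
    have hCa : a ∈ {a ∈ A | b ∈ C a} := mem_filter.mpr ⟨ha, hC a ha b hb hab⟩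
    by_cases hpriv : ∀ a' ∈ A, r a' b → a' = a
    · have hPa : a ∈ {a ∈ A | b ∈ P a} := mem_filter.mpr ⟨ha, hP a ha b hb hab hpriv⟩
      have := card_pos.mpr ⟨a, hCa⟩
      have := card_pos.mpr ⟨a, hPa⟩
      omega
    · push Not at hpriv
      obtain ⟨a', ha', ha'b, hne⟩ := hpriv
      have : 1 < #{a ∈ A | b ∈ C a} :=
        one_lt_card.mpr ⟨a', mem_filter.mpr ⟨ha', hC a' ha' b hb ha'b⟩, a, hCa, hne⟩
      omega
  calc 2 * #B = ∑ _b ∈ B, 2 := by rw [sum_const, smul_eq_mul, mul_comm]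
    _ ≤ ∑ b ∈ B, (#{a ∈ A | b ∈ C a} + #{a ∈ A | b ∈ P a}) := sum_le_sum hweight
    _ = ∑ a ∈ A, (#{b ∈ B | b ∈ C a} + #{b ∈ B | b ∈ P a}) := by
      rw [sum_add_distrib, sum_add_distrib]
      exact congrArg₂ (· + ·)
        (sum_card_bipartiteAbove_eq_sum_card_bipartiteBelow _).symm
        (sum_card_bipartiteAbove_eq_sum_card_bipartiteBelow _).symm
    _ ≤ ∑ a ∈ A, (#(C a) + #(P a)) :=
      sum_le_sum fun a _ => add_le_add (card_le_card fun _ h => (mem_filter.mp h).2)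
        (card_le_card fun _ h => (mem_filter.mp h).2)

def IsWingEdge (G : SimpleGraph V) (u v : V) (f : Sym2 V) : Prop :=
  u ∉ f ∧ v ∉ f ∧ ∃ x ∈ f, G.Adj u x

section LocalCount
open Finset
variable {G : SimpleGraph V} {u v : V} {d : ℕ} {S : Finset (Sym2 V)}

theorem card_le_of_forall_conflict (hS : ∀ f ∈ S, Conflict G s(u, v) f) :
    #S ≤ (#{f ∈ S.erase s(u, v) | u ∈ f} + #{f ∈ S.erase s(u, v) | IsWingEdge G v u f}) +
      (#{f ∈ S.erase s(u, v) | v ∈ f} + #{f ∈ S.erase s(u, v) | IsWingEdge G u v f}) + 1 := by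
  have hpred : #S - 1 ≤ #(S.erase s(u, v)) := pred_card_le_card_erase
  set S' := S.erase s(u, v)
  have hcover : S' ⊆ ({f ∈ S' | u ∈ f} ∪ {f ∈ S' | IsWingEdge G v u f}) ∪
      ({f ∈ S' | v ∈ f} ∪ {f ∈ S' | IsWingEdge G u v f}) := by
    intro f hf
    obtain ⟨a, ha, b, hb, hab⟩ := hS f (mem_of_mem_erase hf)
    by_cases hu : u ∈ f
    · exact mem_union_left _ (mem_union_left _ (mem_filter.mpr ⟨hf, hu⟩))
    by_cases hv : v ∈ f
    · exact mem_union_right _ (mem_union_left _ (mem_filter.mpr ⟨hf, hv⟩))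
    have hb' : a ≠ b := by rintro rfl; rcases Sym2.mem_iff.mp ha with rfl | rfl <;> contradiction
    have hwing : ∃ x ∈ f, G.Adj a x := ⟨b, hb, hab.resolve_left hb'⟩
    rcases Sym2.mem_iff.mp ha with rfl | rfl
    · exact mem_union_right _ (mem_union_right _ (mem_filter.mpr ⟨hf, hu, hv, hwing⟩))
    · exact mem_union_left _ (mem_union_right _ (mem_filter.mpr ⟨hf, hv, hu, hwing⟩))
  calc #S ≤ #S' + 1 := by omega
    _ ≤ _ := Nat.add_le_add_right ((card_le_card hcover).trans ((card_union_le _ _).trans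
        (add_le_add (card_union_le _ _) (card_union_le _ _)))) 1

variable [Fintype V]

theorem card_filter_mem_lt_degree (hSE : ∀ f ∈ S, f ∈ G.edgeSet) (huv : G.Adj u v)
    (hS : s(u, v) ∉ S) : #{f ∈ S | u ∈ f} < G.degree u := by
  rw [← card_incidenceFinset_eq_degree]
  refine card_lt_card ((ssubset_iff_of_subset ?_).mpr ⟨s(u, v), ?_, ?_⟩)
  · intro f hf
    rw [mem_filter] at hf
    simpa [incidenceSet] using ⟨hSE f hf.1, hf.2⟩
  · simpa [incidenceSet] using huv
  · simp [hS]

theorem card_filter_isWingEdge_le (hSE : ∀ f ∈ S, f ∈ G.edgeSet) (hΔ : ∀ w, G.degree w ≤ d)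
    (huv : G.Adj u v) : #{f ∈ S | IsWingEdge G u v f} ≤ (d - 1) ^ 2 := by
  have hsub : {f ∈ S | IsWingEdge G u v f} ⊆
      ((G.neighborFinset u).erase v).biUnion fun x => (G.incidenceFinset x).erase s(x, u) := by
    intro f hf
    obtain ⟨hfS, hu, hv, x, hx, hux⟩ := mem_filter.mp hf
    simp only [mem_biUnion, mem_erase, mem_neighborFinset, mem_incidenceFinset]
    exact ⟨x, ⟨fun h => hv (h ▸ hx), hux⟩, fun h => hu (h ▸ Sym2.mem_mk_right x u),
      hSE f hfS, hx⟩
  have hcard : ∀ x ∈ (G.neighborFinset u).erase v,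
      #((G.incidenceFinset x).erase s(x, u)) ≤ d - 1 := by
    intro x hx
    have hux : G.Adj u x := (mem_neighborFinset ..).mp (mem_of_mem_erase hx)
    rw [card_erase_of_mem (by simpa [incidenceSet] using hux.symm), card_incidenceFinset_eq_degree]
    exact Nat.sub_le_sub_right (hΔ x) 1
  have hnbr : #((G.neighborFinset u).erase v) ≤ d - 1 := by
    rw [card_erase_of_mem ((mem_neighborFinset ..).mpr huv), card_neighborFinset_eq_degree]
    exact Nat.sub_le_sub_right (hΔ u) 1
  calc #{f ∈ S | IsWingEdge G u v f}
      ≤ ∑ x ∈ (G.neighborFinset u).erase v, #((G.incidenceFinset x).erase s(x, u)) :=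
        (card_le_card hsub).trans card_biUnion_le
    _ ≤ #((G.neighborFinset u).erase v) * (d - 1) := by
        simpa using sum_le_card_nsmul _ _ _ hcard
    _ ≤ (d - 1) ^ 2 := by rw [sq]; exact Nat.mul_le_mul_right _ hnbr

end LocalCount

section Clique
open Finset
variable {G : SimpleGraph V} {d : ℕ} {p q x y z : V} {f : Sym2 V} {P : Finset (Sym2 V)}

theorem exists_eq_mk_of_mem_of_ne (hfE : f ∈ G.edgeSet) (hpf : p ∈ f) (hne : f ≠ s(p, q)) :
    ∃ x, f = s(p, x) ∧ G.Adj p x ∧ x ≠ q := by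
  obtain ⟨x, rfl⟩ := Sym2.mem_iff_exists.mp hpf
  exact ⟨x, rfl, hfE, by rintro rfl; exact hne rfl⟩

theorem IsWingEdge.exists_eq_mk (hf : IsWingEdge G q p f) (hfE : f ∈ G.edgeSet) :
    ∃ y z, f = s(y, z) ∧ G.Adj q y ∧ G.Adj y z ∧ y ≠ p ∧ z ≠ p ∧ z ≠ q := by
  obtain ⟨hq, hp, y, hy, hqy⟩ := hf
  obtain ⟨z, rfl⟩ := Sym2.mem_iff_exists.mp hy
  exact ⟨y, z, rfl, hqy, hfE, fun h => hp (h ▸ Sym2.mem_mk_left y z),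
    fun h => hp (h ▸ Sym2.mem_mk_right y z), fun h => hq (h ▸ Sym2.mem_mk_right y z)⟩

variable (h3 : G.CliqueFree 3) (h4 : C4Free G) (hPE : ∀ f ∈ P, f ∈ G.edgeSet)
  (hP : (P : Set (Sym2 V)).Pairwise (Conflict G))
include h3 h4 hPE hP

theorem filter_isWingEdge_eq_empty_of_two_star (hpq : G.Adj p q) {x₁ x₂ : V}
    (h₁ : s(p, x₁) ∈ P) (h₂ : s(p, x₂) ∈ P) (hx₁ : x₁ ≠ q) (hx₂ : x₂ ≠ q) (hx : x₁ ≠ x₂) :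
    {f ∈ P | IsWingEdge G q p f} = ∅ := by
  refine eq_empty_iff_forall_notMem.mpr fun f hf => ?_
  obtain ⟨hfP, hw⟩ := mem_filter.mp hf
  have hne : ∀ x, s(p, x) ≠ f := fun x h => hw.2.1 (h ▸ Sym2.mem_mk_left p x)
  obtain ⟨y, z, rfl, hqy, hyz, hyp, hzp, hzq⟩ := hw.exists_eq_mk (hPE f hfP)
  have hx₁z := adj_of_conflict_star_wing h3 h4 hpq (hPE _ h₁) hx₁ hqy hyz hyp hzp hzq
    (hP h₁ hfP (hne x₁))
  have hx₂z := adj_of_conflict_star_wing h3 h4 hpq (hPE _ h₂) hx₂ hqy hyz hyp hzp hzq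
    (hP h₂ hfP (hne x₂))
  exact h4.false_of_cycle h3 (hPE _ h₁) hx₁z hx₂z.symm (G.adj_symm (hPE _ h₂)) hzp.symm hx

theorem card_filter_isWingEdge_le_one_of_star (hpq : G.Adj p q) (hx : s(p, x) ∈ P)
    (hxq : x ≠ q) : #{f ∈ P | IsWingEdge G q p f} ≤ 1 := by
  refine card_le_one.mpr fun f hf g hg => ?_
  by_contra hfg
  obtain ⟨hfP, hfw⟩ := mem_filter.mp hf
  obtain ⟨hgP, hgw⟩ := mem_filter.mp hg
  have hpx : G.Adj p x := hPE _ hx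
  have hxf : s(p, x) ≠ f := fun h => hfw.2.1 (h ▸ Sym2.mem_mk_left p x)
  have hxg : s(p, x) ≠ g := fun h => hgw.2.1 (h ▸ Sym2.mem_mk_left p x)
  obtain ⟨y, z, rfl, hqy, hyz, hyp, hzp, hzq⟩ := hfw.exists_eq_mk (hPE _ hfP)
  obtain ⟨y', z', rfl, hqy', hyz', hyp', hzp', hzq'⟩ := hgw.exists_eq_mk (hPE _ hgP)
  have hxz := adj_of_conflict_star_wing h3 h4 hpq hpx hxq hqy hyz hyp hzp hzq (hP hx hfP hxf)
  have hxz' := adj_of_conflict_star_wing h3 h4 hpq hpx hxq hqy' hyz' hyp' hzp' hzq'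
    (hP hx hgP hxg)
  by_cases hyy' : y = y'
  · subst hyy'
    have hzz' : z ≠ z' := by rintro rfl; exact hfg rfl
    have hxy : x ≠ y := fun h => h3.not_adj_of_adj_of_adj hpq hqy (h ▸ hpx)
    exact h4.false_of_cycle h3 hxz hyz.symm hyz' hxz'.symm hxy hzz'
  · exact h3.not_adj_of_adj_of_adj hxz.symm hxz'
      (adj_of_conflict_wing_wing h3 h4 hqy hyz hqy' hyz' hzq hzq' hyy' (hP hfP hgP hfg))

theorem card_filter_isWingEdge_lt [Fintype V] (hd : 3 ≤ d) (hΔ : ∀ w, G.degree w ≤ d) :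
    #{f ∈ P | IsWingEdge G q p f} < d := by
  set W := {f ∈ P | IsWingEdge G q p f}
  rcases W.eq_empty_or_nonempty with hWe | ⟨g₀, hg₀⟩
  · rw [hWe, card_empty]
    omega
  obtain ⟨hg₀P, hg₀w⟩ := mem_filter.mp hg₀
  obtain ⟨y₀, z₀, rfl, hqy₀, hyz₀, -, -, hzq₀⟩ := hg₀w.exists_eq_mk (hPE _ hg₀P)
  by_cases hall : ∀ f ∈ W, y₀ ∈ f
  · have hWE : ∀ f ∈ W, f ∈ G.edgeSet := fun f hf => hPE f (mem_filter.mp hf).1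
    have hq : s(y₀, q) ∉ W := fun h => (mem_filter.mp h).2.1 (Sym2.mem_mk_right y₀ q)
    have hlt := card_filter_mem_lt_degree hWE hqy₀.symm hq
    rw [filter_true_of_mem hall] at hlt
    exact hlt.trans_le (hΔ y₀)
  push Not at hall
  obtain ⟨g₁, hg₁, hy₀g₁⟩ := hall
  obtain ⟨hg₁P, hg₁w⟩ := mem_filter.mp hg₁
  have hg₀₁ : s(y₀, z₀) ≠ g₁ := fun h => hy₀g₁ (h ▸ Sym2.mem_mk_left y₀ z₀)
  obtain ⟨y₁, z₁, rfl, hqy₁, hyz₁, -, -, hzq₁⟩ := hg₁w.exists_eq_mk (hPE _ hg₁P)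
  have hy₀₁ : y₀ ≠ y₁ := fun h => hy₀g₁ (h ▸ Sym2.mem_mk_left y₀ z₁)
  have hc₀₁ := hP hg₀P hg₁P hg₀₁
  -- A third wing edge would close a 4-cycle or a triangle through the outer endpoints.
  have hsub : W ⊆ {s(y₀, z₀), s(y₁, z₁)} := by
    intro g hg
    by_contra hg₀₁'
    simp only [mem_insert, mem_singleton, not_or] at hg₀₁'
    obtain ⟨hgP, hgw⟩ := mem_filter.mp hg
    obtain ⟨y, z, rfl, hqy, hyz, -, -, hzq⟩ := hgw.exists_eq_mk (hPE _ hgP)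
    have hc₀ := hP hgP hg₀P hg₀₁'.1
    have hc₁ := hP hgP hg₁P hg₀₁'.2
    by_cases hy₀ : y = y₀
    · subst hy₀
      exact false_of_conflict_two_wing_edges_sharing_vertex h3 h4 hqy₀ hyz₀ hyz hqy₁ hyz₁ hzq₀ hzq
        hzq₁ (fun h => hg₀₁'.1 (h ▸ rfl)) hy₀₁ hc₀₁ hc₁
    by_cases hy₁ : y = y₁
    · subst hy₁
      exact false_of_conflict_two_wing_edges_sharing_vertex h3 h4 hqy₁ hyz₁ hyz hqy₀ hyz₀ hzq₁ hzq
        hzq₀ (fun h => hg₀₁'.2 (h ▸ rfl)) hy₀₁.symm hc₀₁.symm hc₀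
    exact h3.not_adj_of_adj_of_adj
      (adj_of_conflict_wing_wing h3 h4 hqy hyz hqy₀ hyz₀ hzq hzq₀ hy₀ hc₀).symm
      (adj_of_conflict_wing_wing h3 h4 hqy hyz hqy₁ hyz₁ hzq hzq₁ hy₁ hc₁)
      (adj_of_conflict_wing_wing h3 h4 hqy₀ hyz₀ hqy₁ hyz₁ hzq₀ hzq₁ hy₀₁ hc₀₁)
  calc #W ≤ 2 := (card_le_card hsub).trans card_le_two
    _ < d := by omega

theorem card_filter_mem_add_card_filter_isWingEdge_lt [Fintype V] (hd : 3 ≤ d)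
    (hΔ : ∀ w, G.degree w ≤ d) (hpq : G.Adj p q) (hpqP : s(p, q) ∉ P) :
    #{f ∈ P | p ∈ f} + #{f ∈ P | IsWingEdge G q p f} < d := by
  have hstar := card_filter_mem_lt_degree hPE hpq hpqP
  have hrep : ∀ f ∈ {f ∈ P | p ∈ f}, f ∈ P ∧ ∃ x, f = s(p, x) ∧ G.Adj p x ∧ x ≠ q := by
    intro f hf
    obtain ⟨hfP, hpf⟩ := mem_filter.mp hf
    exact ⟨hfP, exists_eq_mk_of_mem_of_ne (hPE f hfP) hpf fun h => hpqP (h ▸ hfP)⟩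
  obtain h₀ | h₁ | h₂ : #{f ∈ P | p ∈ f} = 0 ∨ #{f ∈ P | p ∈ f} = 1 ∨
      1 < #{f ∈ P | p ∈ f} := by omega
  · rw [h₀, zero_add]
    exact card_filter_isWingEdge_lt h3 h4 hPE hP hd hΔ
  · obtain ⟨f, hf⟩ := card_eq_one.mp h₁
    obtain ⟨hfP, x, rfl, -, hxq⟩ := hrep _ (hf ▸ mem_singleton_self _)
    have := card_filter_isWingEdge_le_one_of_star h3 h4 hPE hP hpq hfP hxq
    omega
  · obtain ⟨f₁, hf₁, f₂, hf₂, hne⟩ := one_lt_card.mp h₂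
    obtain ⟨hf₁P, x₁, rfl, -, hx₁⟩ := hrep f₁ hf₁
    obtain ⟨hf₂P, x₂, rfl, -, hx₂⟩ := hrep f₂ hf₂
    rw [filter_isWingEdge_eq_empty_of_two_star h3 h4 hPE hP hpq hf₁P hf₂P hx₁ hx₂
      (fun h => hne (h ▸ rfl)), card_empty, add_zero]
    exact hstar.trans_le (hΔ p)

end Clique

section Bounds
open Finset
variable [Fintype V] {G : SimpleGraph V} {d : ℕ} {u v : V} {S : Finset (Sym2 V)}

theorem card_add_two_mul_le_of_forall_conflict (hΔ : ∀ w, G.degree w ≤ d) (huv : G.Adj u v)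
    (hSE : ∀ f ∈ S, f ∈ G.edgeSet) (hS : ∀ f ∈ S, Conflict G s(u, v) f) :
    #S + 2 * d ≤ 2 * d ^ 2 + 1 := by
  -- That is, `#S ≤ 1 + 2 (d - 1) + 2 (d - 1) ^ 2`, stated without truncated subtraction.
  have hSE' : ∀ f ∈ S.erase s(u, v), f ∈ G.edgeSet := fun f hf => hSE f (mem_of_mem_erase hf)
  have hu := (card_filter_mem_lt_degree hSE' huv (notMem_erase _ _)).trans_le (hΔ u)
  have hv := (card_filter_mem_lt_degree hSE' huv.symm
    (by rw [Sym2.eq_swap]; exact notMem_erase _ _)).trans_le (hΔ v)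
  have hwu := card_filter_isWingEdge_le hSE' hΔ huv
  have hwv := card_filter_isWingEdge_le hSE' hΔ huv.symm
  have hsplit := card_le_of_forall_conflict hS
  obtain ⟨k, rfl⟩ : ∃ k, d = k + 1 := ⟨d - 1, by omega⟩
  rw [Nat.add_sub_cancel] at hwu hwv
  linarith

theorem card_lt_two_mul_of_pairwise_conflict (hd : 3 ≤ d) (hΔ : ∀ w, G.degree w ≤ d)
    (h3 : G.CliqueFree 3) (h4 : C4Free G) (huv : G.Adj u v) (hSE : ∀ f ∈ S, f ∈ G.edgeSet)
    (hS : ∀ f ∈ S, Conflict G s(u, v) f) (hP : (S : Set (Sym2 V)).Pairwise (Conflict G)) :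
    #S < 2 * d := by
  have hSE' : ∀ f ∈ S.erase s(u, v), f ∈ G.edgeSet := fun f hf => hSE f (mem_of_mem_erase hf)
  have hP' : (↑(S.erase s(u, v)) : Set (Sym2 V)).Pairwise (Conflict G) :=
    hP.mono (coe_subset.mpr (erase_subset _ _))
  have hu := card_filter_mem_add_card_filter_isWingEdge_lt h3 h4 hSE' hP' hd hΔ huv
    (notMem_erase _ _)
  have hv := card_filter_mem_add_card_filter_isWingEdge_lt h3 h4 hSE' hP' hd hΔ huv.symm
    (by rw [Sym2.eq_swap]; exact notMem_erase _ _)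
  have := card_le_of_forall_conflict hS
  omega

variable {M : Set (Sym2 V)} {e : Sym2 V}

theorem card_add_card_le_of_subset_cSet_of_subset_pcSet (hd : 3 ≤ d)
    (hΔ : ∀ w, G.degree w ≤ d) (h3 : G.CliqueFree 3) (h4 : C4Free G) (hM : M ⊆ G.edgeSet)
    (hstab : LSStable G M) (he : e ∈ M) {C P : Finset (Sym2 V)} (hC : ↑C ⊆ CSet G e)
    (hP : ↑P ⊆ PCSet G M e) : #C + #P ≤ 2 * d ^ 2 := by
  induction e using Sym2.ind with
  | _ u v =>
    have huv : G.Adj u v := hM he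
    have hCbound := card_add_two_mul_le_of_forall_conflict hΔ huv (fun f hf => (hC hf).1)
      fun f hf => (hC hf).2
    have hPbound := card_lt_two_mul_of_pairwise_conflict hd hΔ h3 h4 huv
      (fun f hf => (hP hf).1.1) (fun f hf => (hP hf).1.2) ((hstab.pairwise_conflict he).mono hP)
    linarith

end Bounds

open Finset in
/-- lower bound for locally optimal induced matchings in `{C₃,C₄}`-free graphs. -/
theorem stmt9 [Fintype V] (G : SimpleGraph V) (d : ℕ) (hd : 3 ≤ d)
    (hΔ : ∀ v : V, (G.neighborSet v).ncard ≤ d)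
    (hC3 : G.CliqueFree 3) (hC4 : C4Free G)
    (M : Set (Sym2 V)) (hmax : IsMaximalInducedMatching G M) (hstab : LSStable G M) :
    (M.ncard : ℝ) ≥ (G.edgeSet.ncard : ℝ) / (d : ℝ) ^ 2 := by
  have hdeg : ∀ v, G.degree v ≤ d := fun v => by
    rw [← card_neighborSet_eq_degree, ← Nat.card_eq_fintype_card, Nat.card_coe_set_eq]
    exact hΔ v
  have hdouble := two_mul_card_le_sum_card_add_card M.toFinset G.edgeFinset (Conflict G)
    (fun e => (CSet G e).toFinset) (fun e => (PCSet G M e).toFinset)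
    (fun f hf => by simpa using hmax.exists_conflict (mem_edgeFinset.mp hf))
    (fun e _ f hf hef => Set.mem_toFinset.mpr ⟨mem_edgeFinset.mp hf, hef⟩)
    (fun e _ f hf hef hpriv => Set.mem_toFinset.mpr <| mem_pcSet_of_forall_conflict_eq
      (mem_edgeFinset.mp hf) hef fun e' he' => hpriv e' (Set.mem_toFinset.mpr he'))
  have hlocal := sum_le_card_nsmul M.toFinset _ (2 * d ^ 2) fun e he =>
    card_add_card_le_of_subset_cSet_of_subset_pcSet hd hdeg hC3 hC4 hmax.1.1 hstab
      (Set.mem_toFinset.mp he) (Set.coe_toFinset _).subset (Set.coe_toFinset _).subset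
  have hedges : #G.edgeFinset ≤ #M.toFinset * d ^ 2 := by
    rw [smul_eq_mul] at hlocal
    linarith
  have hdpos : (0 : ℝ) < (d : ℝ) ^ 2 := by positivity
  rw [ge_iff_le, div_le_iff₀ hdpos, Set.ncard_eq_toFinset_card', Set.ncard_eq_toFinset_card']
  exact_mod_cast hedges
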